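/- arXiv:2010.12618 — 4 statements merged into one kernel-verified Lean document; each statement's English description precedes it below -/
import Mathlib

section
/- Suppose the odds ratio between a model propensity e_η(x) and the true propensity e(x) is bounded: 1/Γ ≤ [e(x)(1-e_η(x))] / [e_η(x)(1-e(x))] ≤ Γ for all x, for some Γ ≥ 1. Define approximate weighted densities g_η(x|T=1) ∝ f(x)p(x|T=1)/e_η(x) and g_η(x|T=0) ∝ f(x)p(x|T=0)/(1-e_η(x)), with f(x) > 0 everywhere. Then the KL divergence satisfies D_KL(g_η(·|T=1) || g_η(·|T=0)) ≤ 2 log Γ. -/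
open MeasureTheory Real

/-- **Generalized balancing.** If the odds ratio between the model propensity `eη`
and the true propensity `e` is bounded by `Γ ≥ 1`, then the KL divergence between
the reweighted treatment and control densities is at most `2 log Γ`. -/
theorem generalized_balancing_KL
    {𝒳 : Type*} [MeasurableSpace 𝒳] (μ : Measure 𝒳)
    (p e eη f : 𝒳 → ℝ) (Γ : ℝ)
    (hp_pos : ∀ x, 0 < p x) (hp_int : Integrable p μ) (hp_one : ∫ x, p x ∂μ = 1)
    (he : ∀ x, 0 < e x ∧ e x < 1) (heη : ∀ x, 0 < eη x ∧ eη x < 1)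
    (hf_pos : ∀ x, 0 < f x)
    (hΓ : 1 ≤ Γ)
    (hodds : ∀ x, 1 / Γ ≤ e x * (1 - eη x) / (eη x * (1 - e x)) ∧
                  e x * (1 - eη x) / (eη x * (1 - e x)) ≤ Γ)
    (Z1 Z0 : ℝ)
    (hZ1 : Z1 = ∫ x, f x * (e x * p x) / eη x ∂μ)
    (hZ0 : Z0 = ∫ x, f x * ((1 - e x) * p x) / (1 - eη x) ∂μ)
    (hint1 : Integrable (fun x => f x * (e x * p x) / eη x) μ)
    (hint0 : Integrable (fun x => f x * ((1 - e x) * p x) / (1 - eη x)) μ)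
    (hZ1_pos : 0 < Z1) (hZ0_pos : 0 < Z0)
    (g1 g0 : 𝒳 → ℝ)
    (hg1 : ∀ x, g1 x = f x * (e x * p x) / eη x / Z1)
    (hg0 : ∀ x, g0 x = f x * ((1 - e x) * p x) / (1 - eη x) / Z0) :
    ∫ x, g1 x * Real.log (g1 x / g0 x) ∂μ ≤ 2 * Real.log Γ := by
  have hΓ0 : (0:ℝ) < Γ := lt_of_lt_of_le one_pos hΓ
  set w1 : 𝒳 → ℝ := fun x => f x * (e x * p x) / eη x with hw1
  set w0 : 𝒳 → ℝ := fun x => f x * ((1 - e x) * p x) / (1 - eη x) with hw0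
  have hw1pos : ∀ x, 0 < w1 x := by
    intro x
    obtain ⟨he1, he2⟩ := he x; obtain ⟨hn1, hn2⟩ := heη x
    have := hf_pos x; have := hp_pos x
    exact div_pos (mul_pos (hf_pos x) (mul_pos he1 (hp_pos x))) hn1
  have hw0pos : ∀ x, 0 < w0 x := by
    intro x
    obtain ⟨he1, he2⟩ := he x; obtain ⟨hn1, hn2⟩ := heη x
    exact div_pos (mul_pos (hf_pos x) (mul_pos (by linarith) (hp_pos x)))
      (by linarith)
  -- pointwise comparisons of w1 and w0
  have h10 : ∀ x, w1 x ≤ Γ * w0 x := by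
    intro x
    obtain ⟨he1, he2⟩ := he x; obtain ⟨hn1, hn2⟩ := heη x
    have hfp : (0:ℝ) < f x * p x := mul_pos (hf_pos x) (hp_pos x)
    have hden : (0:ℝ) < eη x * (1 - e x) := mul_pos hn1 (by linarith)
    have key : e x * (1 - eη x) ≤ Γ * (eη x * (1 - e x)) :=
      (div_le_iff₀ hden).mp (hodds x).2
    have key2 := mul_le_mul_of_nonneg_left key hfp.le
    show f x * (e x * p x) / eη x ≤ Γ * (f x * ((1 - e x) * p x) / (1 - eη x))
    rw [mul_div_assoc' Γ, div_le_div_iff₀ hn1 (by linarith : (0:ℝ) < 1 - eη x)]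
    nlinarith [key2]
  have h01 : ∀ x, w0 x ≤ Γ * w1 x := by
    intro x
    obtain ⟨he1, he2⟩ := he x; obtain ⟨hn1, hn2⟩ := heη x
    have hfp : (0:ℝ) < f x * p x := mul_pos (hf_pos x) (hp_pos x)
    have hden : (0:ℝ) < eη x * (1 - e x) := mul_pos hn1 (by linarith)
    have key : 1 * (eη x * (1 - e x)) ≤ e x * (1 - eη x) * Γ :=
      (div_le_div_iff₀ hΓ0 hden).mp (hodds x).1
    have key2 := mul_le_mul_of_nonneg_left key hfp.le
    show f x * ((1 - e x) * p x) / (1 - eη x) ≤ Γ * (f x * (e x * p x) / eη x)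
    rw [mul_div_assoc' Γ, div_le_div_iff₀ (by linarith : (0:ℝ) < 1 - eη x) hn1]
    nlinarith [key2]
  -- comparisons of normalizing constants
  have hZ01 : Z0 ≤ Γ * Z1 := by
    rw [hZ0, hZ1, ← integral_const_mul]
    exact integral_mono hint0 (hint1.const_mul Γ) h01
  have hZ10 : Z1 ≤ Γ * Z0 := by
    rw [hZ0, hZ1, ← integral_const_mul]
    exact integral_mono hint1 (hint0.const_mul Γ) h10
  have hg1pos : ∀ x, 0 < g1 x := fun x => by
    rw [hg1 x]; exact div_pos (hw1pos x) hZ1_pos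
  have hg0pos : ∀ x, 0 < g0 x := fun x => by
    rw [hg0 x]; exact div_pos (hw0pos x) hZ0_pos
  -- pointwise bounds on the ratio
  have hub' : ∀ x, g1 x ≤ Γ ^ 2 * g0 x := by
    intro x
    have hb := mul_le_mul (h10 x) hZ01 hZ0_pos.le (mul_nonneg hΓ0.le (hw0pos x).le)
    have e1 : g1 x = w1 x / Z1 := hg1 x
    have e0 : g0 x = w0 x / Z0 := hg0 x
    rw [e1, e0, mul_div_assoc', div_le_div_iff₀ hZ1_pos hZ0_pos]
    nlinarith [hb]
  have hlb' : ∀ x, g0 x ≤ Γ ^ 2 * g1 x := by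
    intro x
    have hb := mul_le_mul (h01 x) hZ10 hZ1_pos.le (mul_nonneg hΓ0.le (hw1pos x).le)
    have e1 : g1 x = w1 x / Z1 := hg1 x
    have e0 : g0 x = w0 x / Z0 := hg0 x
    rw [e1, e0, mul_div_assoc', div_le_div_iff₀ hZ0_pos hZ1_pos]
    nlinarith [hb]
  have hub : ∀ x, g1 x / g0 x ≤ Γ ^ 2 := fun x =>
    (div_le_iff₀ (hg0pos x)).mpr (hub' x)
  have hlb : ∀ x, (Γ ^ 2)⁻¹ ≤ g1 x / g0 x := by
    intro x
    rw [le_div_iff₀ (hg0pos x)]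
    have h := hlb' x
    have hΓ2 : (0:ℝ) < Γ ^ 2 := by positivity
    rw [inv_mul_le_iff₀ hΓ2]
    exact h
  have hlogub : ∀ x, Real.log (g1 x / g0 x) ≤ 2 * Real.log Γ := by
    intro x
    have := Real.log_le_log (div_pos (hg1pos x) (hg0pos x)) (hub x)
    rwa [Real.log_pow, Nat.cast_ofNat] at this
  have hloglb : ∀ x, -(2 * Real.log Γ) ≤ Real.log (g1 x / g0 x) := by
    intro x
    have := Real.log_le_log (by positivity : (0:ℝ) < (Γ ^ 2)⁻¹) (hlb x)
    rwa [Real.log_inv, Real.log_pow, Nat.cast_ofNat] at this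
  have hlognn : 0 ≤ 2 * Real.log Γ := by
    have := Real.log_nonneg hΓ; linarith
  -- measurability
  have hg1fun : g1 = fun x => w1 x / Z1 := funext hg1
  have hg0fun : g0 = fun x => w0 x / Z0 := funext hg0
  have hg1int : Integrable g1 μ := by rw [hg1fun]; exact hint1.div_const Z1
  have hg0int : Integrable g0 μ := by rw [hg0fun]; exact hint0.div_const Z0
  have hmeas : AEStronglyMeasurable (fun x => g1 x * Real.log (g1 x / g0 x)) μ := by
    have h1 := hg1int.aemeasurable
    have h0 := hg0int.aemeasurable
    exact (h1.mul (Real.measurable_log.comp_aemeasurable (h1.div h0))).aestronglyMeasurable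
  -- integrability of the KL integrand
  have hKLint : Integrable (fun x => g1 x * Real.log (g1 x / g0 x)) μ := by
    refine Integrable.mono (hg1int.const_mul (2 * Real.log Γ)) hmeas ?_
    filter_upwards with x
    rw [Real.norm_eq_abs, Real.norm_eq_abs, abs_mul, abs_mul,
      abs_of_pos (hg1pos x), abs_of_nonneg hlognn]
    rw [mul_comm (2 * Real.log Γ)]
    exact mul_le_mul_of_nonneg_left (abs_le.mpr ⟨hloglb x, hlogub x⟩) (hg1pos x).le
  -- ∫ g1 = 1
  have hg1one : ∫ x, g1 x ∂μ = 1 := by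
    rw [hg1fun, integral_div, ← hZ1, div_self hZ1_pos.ne']
  calc ∫ x, g1 x * Real.log (g1 x / g0 x) ∂μ
      ≤ ∫ x, g1 x * (2 * Real.log Γ) ∂μ := by
        refine integral_mono hKLint (hg1int.mul_const _) ?_
        intro x
        exact mul_le_mul_of_nonneg_left (hlogub x) (hg1pos x).le
    _ = 2 * Real.log Γ := by
        rw [integral_mul_const, hg1one, one_mul]
end

section
/- Under the bounded odds-ratio assumption (1/Γ ≤ e(x)(1-e_η(x))/(e_η(x)(1-e(x))) ≤ Γ for all x with Γ ≥ 1), the pointwise density ratio of the reweighted treatment and control densities is bounded: 1/Γ² ≤ g_η(x|T=1)/g_η(x|T=0) ≤ Γ² for all x. -/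
open MeasureTheory Set

/-! The odds ratio `r = e (1 - eη) / (eη (1 - e))` is exactly the pointwise ratio of the two
unnormalised densities, so `g₁ / g₀ = r · Z₀ / Z₁`. Integrating `1/Γ ≤ r ≤ Γ` against the control
weight traps `Z₁` between `Z₀ / Γ` and `Γ Z₀`, so `Z₀ / Z₁` obeys the same bounds as `r`, and the
product of two factors in `[1/Γ, Γ]` lies in `[1/Γ², Γ²]`. -/

theorem treated_weight_eq_odds_ratio_mul_control_weight {f p e eη : ℝ}
    (he : e ≠ 1) (heη₀ : eη ≠ 0) (heη₁ : eη ≠ 1) :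
    f * (e * p) / eη = e * (1 - eη) / (eη * (1 - e)) * (f * ((1 - e) * p) / (1 - eη)) := by
  have : 1 - e ≠ 0 := sub_ne_zero.mpr (Ne.symm he)
  have : 1 - eη ≠ 0 := sub_ne_zero.mpr (Ne.symm heη₁)
  field_simp

theorem integral_mul_mem_Icc_of_mem_Icc {α : Type*} [MeasurableSpace α] {μ : Measure α}
    {r w : α → ℝ} {m M : ℝ} (hw : ∀ x, 0 ≤ w x) (hw_int : Integrable w μ)
    (hrw_int : Integrable (fun x => r x * w x) μ) (hr : ∀ x, r x ∈ Icc m M) :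
    ∫ x, r x * w x ∂μ ∈ Icc (m * ∫ x, w x ∂μ) (M * ∫ x, w x ∂μ) := by
  rw [← integral_const_mul, ← integral_const_mul]
  exact ⟨integral_mono (hw_int.const_mul m) hrw_int fun x =>
      mul_le_mul_of_nonneg_right (hr x).1 (hw x),
    integral_mono hrw_int (hw_int.const_mul M) fun x =>
      mul_le_mul_of_nonneg_right (hr x).2 (hw x)⟩

theorem div_mem_Icc_of_mem_Icc_mul {a b Γ : ℝ} (ha : 0 < a) (hb : 0 < b)
    (hab : a ∈ Icc (1 / Γ * b) (Γ * b)) : b / a ∈ Icc (1 / Γ) Γ := by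
  have hΓ : 0 < Γ := pos_of_mul_pos_left (ha.trans_le hab.2) hb.le
  constructor
  · rw [div_le_div_iff₀ hΓ ha]
    linarith [hab.2]
  · rw [div_le_iff₀ ha]
    have := mul_le_mul_of_nonneg_left hab.1 hΓ.le
    rwa [← mul_assoc, mul_one_div_cancel hΓ.ne', one_mul] at this

theorem mul_mem_Icc_one_div_sq {s t Γ : ℝ} (hs₀ : 0 ≤ s) (ht₀ : 0 ≤ t)
    (hs : s ∈ Icc (1 / Γ) Γ) (ht : t ∈ Icc (1 / Γ) Γ) :
    s * t ∈ Icc (1 / Γ ^ 2) (Γ ^ 2) := by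
  have hΓ : 0 ≤ Γ := hs₀.trans hs.2
  rw [← one_div_pow, sq, sq]
  exact ⟨mul_le_mul hs.1 ht.1 (by positivity) hs₀, mul_le_mul hs.2 ht.2 ht₀ hΓ⟩

theorem pointwise_density_ratio_bound_general
    {𝒳 : Type*} [MeasurableSpace 𝒳] (μ : Measure 𝒳)
    (p e eη f : 𝒳 → ℝ) (Γ : ℝ)
    (hp_pos : ∀ x, 0 < p x)
    (he : ∀ x, 0 < e x ∧ e x < 1) (heη : ∀ x, 0 < eη x ∧ eη x < 1)
    (hf_pos : ∀ x, 0 < f x)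
    (hodds : ∀ x, 1 / Γ ≤ e x * (1 - eη x) / (eη x * (1 - e x)) ∧
                  e x * (1 - eη x) / (eη x * (1 - e x)) ≤ Γ)
    (Z1 Z0 : ℝ)
    (hZ1 : Z1 = ∫ x, f x * (e x * p x) / eη x ∂μ)
    (hZ0 : Z0 = ∫ x, f x * ((1 - e x) * p x) / (1 - eη x) ∂μ)
    (hint1 : Integrable (fun x => f x * (e x * p x) / eη x) μ)
    (hint0 : Integrable (fun x => f x * ((1 - e x) * p x) / (1 - eη x)) μ)
    (hZ1_pos : 0 < Z1) (hZ0_pos : 0 < Z0)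
    (g1 g0 : 𝒳 → ℝ)
    (hg1 : ∀ x, g1 x = f x * (e x * p x) / eη x / Z1)
    (hg0 : ∀ x, g0 x = f x * ((1 - e x) * p x) / (1 - eη x) / Z0) :
    ∀ x, 1 / Γ ^ 2 ≤ g1 x / g0 x ∧ g1 x / g0 x ≤ Γ ^ 2 := by
  have hw₀_pos : ∀ x, 0 < f x * ((1 - e x) * p x) / (1 - eη x) := fun x =>
    div_pos (mul_pos (hf_pos x) (mul_pos (sub_pos.mpr (he x).2) (hp_pos x)))
      (sub_pos.mpr (heη x).2)
  have hr_pos : ∀ x, 0 < e x * (1 - eη x) / (eη x * (1 - e x)) := fun x =>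
    div_pos (mul_pos (he x).1 (sub_pos.mpr (heη x).2))
      (mul_pos (heη x).1 (sub_pos.mpr (he x).2))
  have hw₁ : ∀ x, f x * (e x * p x) / eη x =
      e x * (1 - eη x) / (eη x * (1 - e x)) * (f x * ((1 - e x) * p x) / (1 - eη x)) :=
    fun x => treated_weight_eq_odds_ratio_mul_control_weight (he x).2.ne (heη x).1.ne'
      (heη x).2.ne
  have hZ : Z1 ∈ Icc (1 / Γ * Z0) (Γ * Z0) := by
    rw [hZ1, hZ0, funext hw₁]
    exact integral_mul_mem_Icc_of_mem_Icc (fun x => (hw₀_pos x).le) hint0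
      (funext hw₁ ▸ hint1) hodds
  intro x
  have hg : g1 x / g0 x = e x * (1 - eη x) / (eη x * (1 - e x)) * (Z0 / Z1) := by
    rw [hg1, hg0, hw₁, mul_div_assoc, mul_div_assoc,
      div_div_div_cancel_left' _ _ (hw₀_pos x).ne']
  rw [hg]
  exact mul_mem_Icc_one_div_sq (hr_pos x).le (div_pos hZ0_pos hZ1_pos).le (hodds x)
    (div_mem_Icc_of_mem_Icc_mul hZ1_pos hZ0_pos hZ)

/-- Under the bounded odds-ratio assumption with constant `Γ ≥ 1`, the pointwise
density ratio of the reweighted treatment and control densities is bounded: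
`1/Γ² ≤ gη(x|T=1)/gη(x|T=0) ≤ Γ²` for all `x`. -/
theorem pointwise_density_ratio_bound
    {𝒳 : Type*} [MeasurableSpace 𝒳] (μ : Measure 𝒳)
    (p e eη f : 𝒳 → ℝ) (Γ : ℝ)
    (hp_pos : ∀ x, 0 < p x) (hp_int : Integrable p μ) (hp_one : ∫ x, p x ∂μ = 1)
    (he : ∀ x, 0 < e x ∧ e x < 1) (heη : ∀ x, 0 < eη x ∧ eη x < 1)
    (hf_pos : ∀ x, 0 < f x)
    (hΓ : 1 ≤ Γ)
    (hodds : ∀ x, 1 / Γ ≤ e x * (1 - eη x) / (eη x * (1 - e x)) ∧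
                  e x * (1 - eη x) / (eη x * (1 - e x)) ≤ Γ)
    (Z1 Z0 : ℝ)
    (hZ1 : Z1 = ∫ x, f x * (e x * p x) / eη x ∂μ)
    (hZ0 : Z0 = ∫ x, f x * ((1 - e x) * p x) / (1 - eη x) ∂μ)
    (hint1 : Integrable (fun x => f x * (e x * p x) / eη x) μ)
    (hint0 : Integrable (fun x => f x * ((1 - e x) * p x) / (1 - eη x)) μ)
    (hZ1_pos : 0 < Z1) (hZ0_pos : 0 < Z0)
    (g1 g0 : 𝒳 → ℝ)
    (hg1 : ∀ x, g1 x = f x * (e x * p x) / eη x / Z1)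
    (hg0 : ∀ x, g0 x = f x * ((1 - e x) * p x) / (1 - eη x) / Z0) :
    ∀ x, 1 / Γ ^ 2 ≤ g1 x / g0 x ∧ g1 x / g0 x ≤ Γ ^ 2 :=
  pointwise_density_ratio_bound_general μ p e eη f Γ hp_pos he heη hf_pos hodds Z1 Z0 hZ1 hZ0 hint1
    hint0 hZ1_pos hZ0_pos g1 g0 hg1 hg0
end

section
/- Under ignorability and positivity, for any tilting function f ≥ 0 with 0 < E[f(X)] < ∞, the weighted estimand identity holds: E[w(X,T)·T·Y] / E[f(X)] − E[w(X,T)·(1−T)·Y] / E[f(X)] = E_g[τ(X)], where w(x,t) = f(x)/[t·e(x)+(1−t)(1−e(x))], g(x) ∝ f(x)p(x), and τ(x) = E[Y(1)−Y(0)|X=x]. (Weighted estimator identifies the tilted average treatment effect.) -/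
open MeasureTheory ProbabilityTheory Real

/-!
Conditioning on `X`, ignorability makes the treatment indicator `T` and the potential outcome
`Y₁` conditionally independent, so `E[T·Y₁ | X] = e(X)·E[Y₁ | X]`. The weight `f(X)/e(X)` is
`X`-measurable and can be pulled out of the conditional expectation, which gives
`E[f(X)/e(X)·T·Y] = E[f(X)·E[Y₁ | X]]`; symmetrically with `1 - T` and `1 - e(X)` for the
control arm. Subtracting, `E[Y₁ - Y₀ | X] = τ(X)` leaves `E[f(X)·τ(X)]`.
-/

namespace ProbabilityTheory

open Set

variable {Ω : Type*} {m : MeasurableSpace Ω} [mΩ : MeasurableSpace Ω] [StandardBorelSpace Ω]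
  {μ : Measure Ω} [IsFiniteMeasure μ] {hm : m ≤ mΩ}

theorem CondIndepFun.ae_indepFun_condExpKernel {ξ η : Ω → ℝ} (h : CondIndepFun m hm ξ η μ)
    (hξ : Measurable ξ) (hη : Measurable η) :
    ∀ᵐ ω ∂μ, IndepFun ξ η (condExpKernel μ m ω) := by
  -- The rays `Iic q`, `q : ℚ`, form a countable generating π-system, so the product rule for
  -- them holds simultaneously for almost every `ω`.
  have hrays : ∀ᵐ ω ∂(μ.trim hm), ∀ p q : ℚ,
      condExpKernel μ m ω (ξ ⁻¹' Iic (p : ℝ) ∩ η ⁻¹' Iic (q : ℝ))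
        = condExpKernel μ m ω (ξ ⁻¹' Iic (p : ℝ))
          * condExpKernel μ m ω (η ⁻¹' Iic (q : ℝ)) := by
    simp only [ae_all_iff]
    exact fun p q => Kernel.indepFun_iff_measure_inter_preimage_eq_mul.mp h _ _
      measurableSet_Iic measurableSet_Iic
  filter_upwards [ae_of_ae_trim hm hrays] with ω hω
  have hpi : IsPiSystem (⋃ a : ℚ, {Iic (a : ℝ)}) := isPiSystem_Iic_rat
  have hgen : MeasurableSpace.generateFrom (⋃ a : ℚ, {Iic (a : ℝ)}) = Real.measurableSpace :=
    borel_eq_generateFrom_Iic_rat.symm.trans (BorelSpace.measurable_eq (α := ℝ)).symm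
  refine IndepSets.indep hξ.comap_le hη.comap_le (hpi.comap ξ) (hpi.comap η)
    (by rw [← hgen, MeasurableSpace.comap_generateFrom]; rfl)
    (by rw [← hgen, MeasurableSpace.comap_generateFrom]; rfl) ?_
  rintro _ _ ⟨s, hs, rfl⟩ ⟨t, ht, rfl⟩
  simp only [mem_iUnion, mem_singleton_iff] at hs ht
  obtain ⟨p, rfl⟩ := hs
  obtain ⟨q, rfl⟩ := ht
  exact Filter.Eventually.of_forall fun _ => hω p q

theorem CondIndepFun.condExp_mul_ae_eq [Nonempty Ω] {ξ η : Ω → ℝ}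
    (h : CondIndepFun m hm ξ η μ) (hξ : Measurable ξ) (hη : Measurable η)
    (hξ_int : Integrable ξ μ) (hη_int : Integrable η μ)
    (hξη_int : Integrable (fun ω => ξ ω * η ω) μ) :
    μ[fun ω => ξ ω * η ω | m] =ᵐ[μ] fun ω => (μ[ξ | m]) ω * (μ[η | m]) ω := by
  filter_upwards [condExp_ae_eq_integral_condExpKernel hm hξη_int,
    condExp_ae_eq_integral_condExpKernel hm hξ_int,
    condExp_ae_eq_integral_condExpKernel hm hη_int,
    h.ae_indepFun_condExpKernel hξ hη, hξ_int.condExpKernel_ae (m := m),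
    hη_int.condExpKernel_ae (m := m)] with ω hξη_eq hξ_eq hη_eq hindep hξ_int' hη_int'
  rw [hξη_eq, hξ_eq, hη_eq]
  exact hindep.integral_fun_mul_eq_mul_integral hξ_int'.aestronglyMeasurable
    hη_int'.aestronglyMeasurable

theorem CondIndepFun.condExp_div_mul_ae_eq [Nonempty Ω] {S Z g p : Ω → ℝ} {C : ℝ}
    (h : CondIndepFun m hm S Z μ) (hS : Measurable S) (hZ : Measurable Z)
    (hS_bdd : ∀ᵐ ω ∂μ, ‖S ω‖ ≤ C) (hZ_int : Integrable Z μ) (hg : Measurable[m] g)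
    (hp : Measurable[m] p) (hp_ne : ∀ᵐ ω ∂μ, p ω ≠ 0) (hpS : μ[S | m] =ᵐ[μ] p)
    (hint : Integrable (fun ω => g ω / p ω * (S ω * Z ω)) μ) :
    μ[fun ω => g ω / p ω * (S ω * Z ω) | m] =ᵐ[μ] fun ω => g ω * (μ[Z | m]) ω := by
  have hSZ_int : Integrable (fun ω => S ω * Z ω) μ :=
    hZ_int.bdd_mul hS.aestronglyMeasurable hS_bdd
  have hprod := h.condExp_mul_ae_eq hS hZ
    ((integrable_const C).mono' hS.aestronglyMeasurable hS_bdd) hZ_int hSZ_int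
  filter_upwards [condExp_mul_of_stronglyMeasurable_left (hg.div hp).stronglyMeasurable hint
    hSZ_int, hprod, hpS, hp_ne] with ω hpull hprodω hpω hpω_ne
  change μ[g / p * fun ω => S ω * Z ω | m] ω = _
  rw [hpull, Pi.mul_apply, Pi.div_apply, hprodω, hpω]
  field_simp

end ProbabilityTheory

theorem weighted_estimand_identity_general
    {Ω : Type*} [mΩ : MeasurableSpace Ω] [StandardBorelSpace Ω] [Nonempty Ω]
    {𝒳 : Type*} [MeasurableSpace 𝒳]
    (μ : Measure Ω) [IsProbabilityMeasure μ]
    (X : Ω → 𝒳) (T : Ω → ℝ) (Y0 Y1 : Ω → ℝ)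
    (hT : Measurable T)
    (hY0 : Measurable Y0) (hY1 : Measurable Y1)
    (hT_bin : ∀ ω, T ω = 0 ∨ T ω = 1)
    (hY0_int : Integrable Y0 μ) (hY1_int : Integrable Y1 μ)
    (mX : MeasurableSpace Ω)
    (hmX : mX = MeasurableSpace.comap X inferInstance)
    (hle : mX ≤ mΩ)
    (hignorability : CondIndepFun mX hle (fun ω => (Y0 ω, Y1 ω)) T μ)
    (e : 𝒳 → ℝ) (he_meas : Measurable e)
    (he_version : (μ[T | mX]) =ᵐ[μ] fun ω => e (X ω))
    (hpositivity : ∀ x, 0 < e x ∧ e x < 1)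
    (τ : 𝒳 → ℝ)
    (hτ_version : (μ[fun ω => Y1 ω - Y0 ω | mX]) =ᵐ[μ] fun ω => τ (X ω))
    (f : 𝒳 → ℝ) (hf_meas : Measurable f)
    (Y : Ω → ℝ)
    (hY : ∀ ω, Y ω = T ω * Y1 ω + (1 - T ω) * Y0 ω)
    (hint_t : Integrable (fun ω => f (X ω) / e (X ω) * (T ω * Y ω)) μ)
    (hint_c : Integrable (fun ω => f (X ω) / (1 - e (X ω)) * ((1 - T ω) * Y ω)) μ) :
    (∫ ω, f (X ω) / e (X ω) * (T ω * Y ω) ∂μ) / (∫ ω, f (X ω) ∂μ)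
      - (∫ ω, f (X ω) / (1 - e (X ω)) * ((1 - T ω) * Y ω) ∂μ) / (∫ ω, f (X ω) ∂μ)
      = (∫ ω, f (X ω) * τ (X ω) ∂μ) / (∫ ω, f (X ω) ∂μ) := by
  have hXm : Measurable[mX] X := hmX ▸ comap_measurable X
  have hT_bdd : ∀ ω, ‖T ω‖ ≤ 1 ∧ ‖1 - T ω‖ ≤ 1 := fun ω => by
    rcases hT_bin ω with h | h <;> simp [h]
  have hY_treated : ∀ ω, T ω * Y ω = T ω * Y1 ω := fun ω => by
    rcases hT_bin ω with h | h <;> simp [hY ω, h]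
  have hY_control : ∀ ω, (1 - T ω) * Y ω = (1 - T ω) * Y0 ω := fun ω => by
    rcases hT_bin ω with h | h <;> simp [hY ω, h]
  have he_control : μ[fun ω => 1 - T ω | mX] =ᵐ[μ] fun ω => 1 - e (X ω) := by
    have hT_int : Integrable T μ :=
      (integrable_const 1).mono' hT.aestronglyMeasurable (ae_of_all _ fun ω => (hT_bdd ω).1)
    filter_upwards [condExp_sub (integrable_const 1) hT_int mX, he_version] with ω hsub he
    change μ[(fun _ => (1 : ℝ)) - T | mX] ω = _
    rw [hsub, Pi.sub_apply, condExp_const hle, he]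
  have htreated : μ[fun ω => f (X ω) / e (X ω) * (T ω * Y ω) | mX]
      =ᵐ[μ] fun ω => f (X ω) * (μ[Y1 | mX]) ω := by
    simp_rw [hY_treated] at hint_t ⊢
    exact (hignorability.symm.comp measurable_id measurable_snd).condExp_div_mul_ae_eq
      (mΩ := mΩ) hT hY1 (ae_of_all _ fun ω => (hT_bdd ω).1) hY1_int (hf_meas.comp hXm)
      (he_meas.comp hXm) (ae_of_all _ fun ω => (hpositivity _).1.ne') he_version hint_t
  have hcontrol : μ[fun ω => f (X ω) / (1 - e (X ω)) * ((1 - T ω) * Y ω) | mX]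
      =ᵐ[μ] fun ω => f (X ω) * (μ[Y0 | mX]) ω := by
    simp_rw [hY_control] at hint_c ⊢
    exact (hignorability.symm.comp (measurable_const.sub measurable_id)
      measurable_fst).condExp_div_mul_ae_eq (mΩ := mΩ) (measurable_const.sub hT) hY0
      (ae_of_all _ fun ω => (hT_bdd ω).2) hY0_int (hf_meas.comp hXm)
      ((measurable_const.sub he_meas).comp hXm)
      (ae_of_all _ fun ω => (sub_pos.2 (hpositivity _).2).ne') he_control hint_c
  have heffect : (fun ω => f (X ω) * τ (X ω))
      =ᵐ[μ] fun ω => f (X ω) * (μ[Y1 | mX]) ω - f (X ω) * (μ[Y0 | mX]) ω := by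
    filter_upwards [condExp_sub hY1_int hY0_int mX, hτ_version] with ω hsub hτ
    rw [← hτ, show (fun ω => Y1 ω - Y0 ω) = Y1 - Y0 from rfl, hsub, Pi.sub_apply, mul_sub]
  rw [div_sub_div_same, ← integral_condExp hle,
    ← integral_condExp hle (f := fun ω => _ * (_ * Y ω)), integral_congr_ae htreated,
    integral_congr_ae hcontrol, integral_congr_ae heffect,
    integral_sub (integrable_condExp.congr htreated) (integrable_condExp.congr hcontrol)]

/-- **The weighted estimator identifies the tilted average treatment effect.**
Under ignorability and positivity, for a tilting function `f ≥ 0` with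
`0 < E[f(X)] < ∞`, with balancing weights `w(x,1) = f(x)/e(x)`,
`w(x,0) = f(x)/(1−e(x))`:
`E[w(X,T)·T·Y]/E[f(X)] − E[w(X,T)·(1−T)·Y]/E[f(X)] = E[f(X)τ(X)]/E[f(X)] = E_g[τ(X)]`. -/
theorem weighted_estimand_identity
    {Ω : Type*} [mΩ : MeasurableSpace Ω] [StandardBorelSpace Ω] [Nonempty Ω]
    {𝒳 : Type*} [MeasurableSpace 𝒳]
    (μ : Measure Ω) [IsProbabilityMeasure μ]
    (X : Ω → 𝒳) (T : Ω → ℝ) (Y0 Y1 : Ω → ℝ)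
    (hX : Measurable X) (hT : Measurable T)
    (hY0 : Measurable Y0) (hY1 : Measurable Y1)
    (hT_bin : ∀ ω, T ω = 0 ∨ T ω = 1)
    (hY0_int : Integrable Y0 μ) (hY1_int : Integrable Y1 μ)
    (mX : MeasurableSpace Ω)
    (hmX : mX = MeasurableSpace.comap X inferInstance)
    (hle : mX ≤ mΩ)
    (hignorability : CondIndepFun mX hle (fun ω => (Y0 ω, Y1 ω)) T μ)
    (e : 𝒳 → ℝ) (he_meas : Measurable e)
    (he_version : (μ[T | mX]) =ᵐ[μ] fun ω => e (X ω))
    (hpositivity : ∀ x, 0 < e x ∧ e x < 1)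
    (τ : 𝒳 → ℝ) (hτ_meas : Measurable τ)
    (hτ_version : (μ[fun ω => Y1 ω - Y0 ω | mX]) =ᵐ[μ] fun ω => τ (X ω))
    (f : 𝒳 → ℝ) (hf_meas : Measurable f) (hf_nonneg : ∀ x, 0 ≤ f x)
    (hfX_int : Integrable (fun ω => f (X ω)) μ)
    (hfX_pos : 0 < ∫ ω, f (X ω) ∂μ)
    (Y : Ω → ℝ)
    (hY : ∀ ω, Y ω = T ω * Y1 ω + (1 - T ω) * Y0 ω)
    (hint_t : Integrable (fun ω => f (X ω) / e (X ω) * (T ω * Y ω)) μ)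
    (hint_c : Integrable (fun ω => f (X ω) / (1 - e (X ω)) * ((1 - T ω) * Y ω)) μ)
    (hint_τ : Integrable (fun ω => f (X ω) * τ (X ω)) μ) :
    (∫ ω, f (X ω) / e (X ω) * (T ω * Y ω) ∂μ) / (∫ ω, f (X ω) ∂μ)
      - (∫ ω, f (X ω) / (1 - e (X ω)) * ((1 - T ω) * Y ω) ∂μ) / (∫ ω, f (X ω) ∂μ)
      = (∫ ω, f (X ω) * τ (X ω) ∂μ) / (∫ ω, f (X ω) ∂μ) :=
  weighted_estimand_identity_general (mΩ := mΩ) μ X T Y0 Y1 hT hY0 hY1 hT_bin hY0_int hY1_int mX hmX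
    hle hignorability e he_meas he_version hpositivity τ hτ_version f hf_meas Y hY hint_t hint_c
end

section
/- Under the bounded odds-ratio assumption with constant Γ ≥ 1, the symmetrized KL divergence between the reweighted treatment and control densities satisfies D_KL(g_η(·|T=1)||g_η(·|T=0)) + D_KL(g_η(·|T=0)||g_η(·|T=1)) ≤ 4 log Γ, and hence the total variation distance satisfies TV(g_η(·|T=1), g_η(·|T=0)) ≤ √(log Γ). -/
/-!
The log-likelihood ratio `log (g1 / g0)` is the log odds ratio, of absolute value at most
`log Γ`, plus the constant `log (Z0 / Z1)`. The symmetrized KL divergence equals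
`∫ (g1 - g0) log (g1 / g0)`; as `∫ (g1 - g0) = 0` the constant drops out, which leaves at most
`log Γ ∫ |g1 - g0| ≤ 2 log Γ`. For total variation, the pointwise bound
`2 (a - b)² / (a + b) ≤ (a - b) log (a / b)` and Cauchy–Schwarz with weight `g1 + g0` give the
symmetrized Pinsker inequality `(∫ |g1 - g0|)² ≤ ∫ (g1 - g0) log (g1 / g0)`.
-/

open MeasureTheory Real

theorem Real.two_mul_sq_le_mul_log_sub_log {x : ℝ} (hx : |x| < 1) :
    2 * x ^ 2 ≤ x * (log (1 + x) - log (1 - x)) := by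
  have hsum := (hasSum_log_sub_log_of_abs_lt_one hx).mul_left x
  have hterm (k : ℕ) : x * (2 * (1 / (2 * k + 1)) * x ^ (2 * k + 1))
      = 2 / (2 * k + 1) * (x ^ 2) ^ (k + 1) := by ring
  calc 2 * x ^ 2 = ∑ k ∈ Finset.range 1, x * (2 * (1 / (2 * k + 1)) * x ^ (2 * k + 1)) := by
        norm_num
        ring
    _ ≤ _ := sum_le_hasSum _ (fun k _ => by rw [hterm]; positivity) hsum

theorem Real.two_mul_sq_div_add_le_mul_log_div {a b : ℝ} (ha : 0 < a) (hb : 0 < b) :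
    2 * (a - b) ^ 2 / (a + b) ≤ (a - b) * log (a / b) := by
  have hab : 0 < a + b := by positivity
  obtain ⟨x, hx_def⟩ : ∃ x, x = (a - b) / (a + b) := ⟨_, rfl⟩
  have hx : |x| < 1 := by
    rw [hx_def, abs_lt, lt_div_iff₀ hab, div_lt_iff₀ hab]; constructor <;> linarith
  have hlog : log (1 + x) - log (1 - x) = log (a / b) := by
    have hadd : 1 + x = 2 * a / (a + b) := by rw [hx_def]; field_simp; ring
    have hsub : 1 - x = 2 * b / (a + b) := by rw [hx_def]; field_simp; ring
    rw [hadd, hsub, ← log_div (by positivity) (by positivity)]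
    congr 1
    field_simp
  have key := two_mul_sq_le_mul_log_sub_log hx
  rw [hlog] at key
  calc 2 * (a - b) ^ 2 / (a + b) = (a + b) * (2 * x ^ 2) := by rw [hx_def]; field_simp
    _ ≤ (a + b) * (x * log (a / b)) := by gcongr
    _ = (a - b) * log (a / b) := by rw [hx_def]; field_simp

theorem Real.abs_log_le_log_of_inv_le_of_le {r Γ : ℝ} (hΓ : 0 < Γ) (h₁ : Γ⁻¹ ≤ r)
    (h₂ : r ≤ Γ) : |log r| ≤ log Γ := by
  have hr : 0 < r := (inv_pos.2 hΓ).trans_le h₁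
  refine abs_le.2 ⟨?_, log_le_log hr h₂⟩
  rw [← log_inv]
  exact log_le_log (inv_pos.2 hΓ) h₁

section

variable {α : Type*} [MeasurableSpace α] {μ : Measure α}

theorem sq_integral_abs_le_integral_sq_div_mul_integral {u w : α → ℝ}
    (hu : AEStronglyMeasurable u μ) (hw : Integrable w μ) (hw_pos : ∀ x, 0 < w x)
    (huw : Integrable (fun x => u x ^ 2 / w x) μ) :
    (∫ x, |u x| ∂μ) ^ 2 ≤ (∫ x, u x ^ 2 / w x ∂μ) * ∫ x, w x ∂μ := by
  have hsqrt : AEStronglyMeasurable (fun x => √(w x)) μ :=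
    continuous_sqrt.comp_aestronglyMeasurable hw.1
  have hfm : AEStronglyMeasurable (fun x => |u x| / √(w x)) μ :=
    ((continuous_abs.comp_aestronglyMeasurable hu).aemeasurable.div
      hsqrt.aemeasurable).aestronglyMeasurable
  have hf : MemLp (fun x => |u x| / √(w x)) (ENNReal.ofReal 2) μ := by
    rw [ENNReal.ofReal_ofNat, memLp_two_iff_integrable_sq hfm]
    refine huw.congr (ae_of_all _ fun x => ?_)
    simp only [div_pow, sq_abs, sq_sqrt (hw_pos x).le]
  have hg : MemLp (fun x => √(w x)) (ENNReal.ofReal 2) μ := by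
    rw [ENNReal.ofReal_ofNat, memLp_two_iff_integrable_sq hsqrt]
    exact hw.congr (ae_of_all _ fun x => (sq_sqrt (hw_pos x).le).symm)
  have holder := integral_mul_le_Lp_mul_Lq_of_nonneg Real.HolderConjugate.two_two
    (ae_of_all _ fun x => by positivity) (ae_of_all _ fun x => by positivity) hf hg
  simp only [rpow_two, div_pow, sq_abs, sq_sqrt (hw_pos _).le, ← sqrt_eq_rpow,
    div_mul_cancel₀ _ (sqrt_pos.2 (hw_pos _)).ne'] at holder
  calc (∫ x, |u x| ∂μ) ^ 2 ≤ (√(∫ x, u x ^ 2 / w x ∂μ) * √(∫ x, w x ∂μ)) ^ 2 := by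
        gcongr
    _ = (∫ x, u x ^ 2 / w x ∂μ) * ∫ x, w x ∂μ := by
        rw [mul_pow, sq_sqrt (integral_nonneg fun x => by have := hw_pos x; positivity),
          sq_sqrt (integral_nonneg fun x => (hw_pos x).le)]

variable {g₁ g₀ : α → ℝ}

theorem integral_mul_log_div_add_integral_mul_log_div_rev
    (h₁ : Integrable (fun x => g₁ x * log (g₁ x / g₀ x)) μ)
    (h₀ : Integrable (fun x => g₀ x * log (g₁ x / g₀ x)) μ) :
    (∫ x, g₁ x * log (g₁ x / g₀ x) ∂μ) + ∫ x, g₀ x * log (g₀ x / g₁ x) ∂μ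
      = ∫ x, (g₁ x - g₀ x) * log (g₁ x / g₀ x) ∂μ := by
  have hrev (x : α) : g₀ x * log (g₀ x / g₁ x) = -(g₀ x * log (g₁ x / g₀ x)) := by
    rw [← inv_div, log_inv, mul_neg]
  simp only [hrev, integral_neg, ← sub_eq_add_neg, ← integral_sub h₁ h₀, sub_mul]

theorem integrable_mul_log_div {g : α → ℝ} {c M : ℝ} (hg : Integrable g μ)
    (hg₁ : AEMeasurable g₁ μ) (hg₀ : AEMeasurable g₀ μ)
    (hL : ∀ x, |log (g₁ x / g₀ x) - c| ≤ M) :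
    Integrable (fun x => g x * log (g₁ x / g₀ x)) μ :=
  hg.mul_bdd (c := M + |c|) (measurable_log.comp_aemeasurable (hg₁.div hg₀)).aestronglyMeasurable
    (ae_of_all _ fun x => by
      rw [norm_eq_abs]
      linarith [abs_sub_abs_le_abs_sub (log (g₁ x / g₀ x)) c, hL x])

theorem integral_sub_mul_log_div_le {c M : ℝ} (hg₁ : Integrable g₁ μ) (hg₀ : Integrable g₀ μ)
    (hg₁_nonneg : ∀ x, 0 ≤ g₁ x) (hg₀_nonneg : ∀ x, 0 ≤ g₀ x)
    (h₁ : ∫ x, g₁ x ∂μ = 1) (h₀ : ∫ x, g₀ x ∂μ = 1)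
    (hL : ∀ x, |log (g₁ x / g₀ x) - c| ≤ M) :
    ∫ x, (g₁ x - g₀ x) * log (g₁ x / g₀ x) ∂μ ≤ 2 * M := by
  have hdiff : Integrable (fun x => g₁ x - g₀ x) μ := hg₁.sub hg₀
  have hint : Integrable (fun x => (g₁ x - g₀ x) * (log (g₁ x / g₀ x) - c)) μ :=
    hdiff.mul_bdd
      ((measurable_log.comp_aemeasurable (hg₁.1.aemeasurable.div hg₀.1.aemeasurable)).sub
        aemeasurable_const).aestronglyMeasurable
      (ae_of_all _ fun x => by rw [norm_eq_abs]; exact hL x)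
  have hpt (x : α) : (g₁ x - g₀ x) * (log (g₁ x / g₀ x) - c) ≤ (g₁ x + g₀ x) * M :=
    calc _ ≤ |g₁ x - g₀ x| * |log (g₁ x / g₀ x) - c| := by rw [← abs_mul]; exact le_abs_self _
      _ ≤ (g₁ x + g₀ x) * M := by
        have habs : |g₁ x - g₀ x| ≤ g₁ x + g₀ x := by
          rw [abs_sub_le_iff]
          constructor <;> linarith [hg₁_nonneg x, hg₀_nonneg x]
        exact mul_le_mul habs (hL x) (abs_nonneg _) (habs.trans' (abs_nonneg _))
  calc ∫ x, (g₁ x - g₀ x) * log (g₁ x / g₀ x) ∂μ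
      = ∫ x, ((g₁ x - g₀ x) * (log (g₁ x / g₀ x) - c) + (g₁ x - g₀ x) * c) ∂μ := by
        congr 1 with x; ring
    _ = ∫ x, (g₁ x - g₀ x) * (log (g₁ x / g₀ x) - c) ∂μ := by
        rw [integral_add hint (hdiff.mul_const c), integral_mul_const, integral_sub hg₁ hg₀,
          h₁, h₀, sub_self, zero_mul, add_zero]
    _ ≤ ∫ x, (g₁ x + g₀ x) * M ∂μ := integral_mono hint ((hg₁.add hg₀).mul_const M) hpt
    _ = 2 * M := by rw [integral_mul_const, integral_add hg₁ hg₀, h₁, h₀]; ring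

theorem sq_integral_abs_sub_le_integral_sub_mul_log_div
    (hg₁ : Integrable g₁ μ) (hg₀ : Integrable g₀ μ)
    (hg₁_pos : ∀ x, 0 < g₁ x) (hg₀_pos : ∀ x, 0 < g₀ x)
    (h₁ : ∫ x, g₁ x ∂μ = 1) (h₀ : ∫ x, g₀ x ∂μ = 1)
    (hS : Integrable (fun x => (g₁ x - g₀ x) * log (g₁ x / g₀ x)) μ) :
    (∫ x, |g₁ x - g₀ x| ∂μ) ^ 2 ≤ ∫ x, (g₁ x - g₀ x) * log (g₁ x / g₀ x) ∂μ := by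
  have hsum := hg₁.add hg₀
  have hpt (x : α) : (g₁ x - g₀ x) ^ 2 / (g₁ x + g₀ x)
      ≤ 1 / 2 * ((g₁ x - g₀ x) * log (g₁ x / g₀ x)) := by
    have key := two_mul_sq_div_add_le_mul_log_div (hg₁_pos x) (hg₀_pos x)
    rw [mul_div_assoc] at key
    linarith
  have hint : Integrable (fun x => (g₁ x - g₀ x) ^ 2 / (g₁ x + g₀ x)) μ := by
    refine (hS.const_mul (1 / 2)).mono'
      (((hg₁.sub hg₀).1.aemeasurable.pow_const 2).div hsum.1.aemeasurable).aestronglyMeasurable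
      (ae_of_all _ fun x => ?_)
    rw [norm_eq_abs, abs_of_nonneg (by have := hg₁_pos x; have := hg₀_pos x; positivity)]
    exact hpt x
  calc (∫ x, |g₁ x - g₀ x| ∂μ) ^ 2
      ≤ (∫ x, (g₁ x - g₀ x) ^ 2 / (g₁ x + g₀ x) ∂μ) * ∫ x, (g₁ x + g₀ x) ∂μ :=
        sq_integral_abs_le_integral_sq_div_mul_integral (hg₁.sub hg₀).1 hsum
          (fun x => add_pos (hg₁_pos x) (hg₀_pos x)) hint
    _ ≤ (∫ x, 1 / 2 * ((g₁ x - g₀ x) * log (g₁ x / g₀ x)) ∂μ) * 2 := by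
        rw [integral_add hg₁ hg₀, h₁, h₀, one_add_one_eq_two]
        exact mul_le_mul_of_nonneg_right (integral_mono hint (hS.const_mul _) hpt) zero_le_two
    _ = ∫ x, (g₁ x - g₀ x) * log (g₁ x / g₀ x) ∂μ := by rw [integral_const_mul]; ring

end

theorem symmetrized_kl_and_tv_bound_general
    {𝒳 : Type*} [MeasurableSpace 𝒳] (μ : Measure 𝒳)
    (p e eη f : 𝒳 → ℝ) (Γ : ℝ)
    (hp_pos : ∀ x, 0 < p x)
    (he : ∀ x, 0 < e x ∧ e x < 1) (heη : ∀ x, 0 < eη x ∧ eη x < 1)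
    (hf_pos : ∀ x, 0 < f x)
    (hΓ : 1 ≤ Γ)
    (hodds : ∀ x, 1 / Γ ≤ e x * (1 - eη x) / (eη x * (1 - e x)) ∧
                  e x * (1 - eη x) / (eη x * (1 - e x)) ≤ Γ)
    (Z1 Z0 : ℝ)
    (hZ1 : Z1 = ∫ x, f x * (e x * p x) / eη x ∂μ)
    (hZ0 : Z0 = ∫ x, f x * ((1 - e x) * p x) / (1 - eη x) ∂μ)
    (hint1 : Integrable (fun x => f x * (e x * p x) / eη x) μ)
    (hint0 : Integrable (fun x => f x * ((1 - e x) * p x) / (1 - eη x)) μ)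
    (hZ1_pos : 0 < Z1) (hZ0_pos : 0 < Z0)
    (g1 g0 : 𝒳 → ℝ)
    (hg1 : ∀ x, g1 x = f x * (e x * p x) / eη x / Z1)
    (hg0 : ∀ x, g0 x = f x * ((1 - e x) * p x) / (1 - eη x) / Z0) :
    (∫ x, g1 x * Real.log (g1 x / g0 x) ∂μ)
      + (∫ x, g0 x * Real.log (g0 x / g1 x) ∂μ) ≤ 4 * Real.log Γ ∧
    (1 / 2) * ∫ x, |g1 x - g0 x| ∂μ ≤ Real.sqrt (Real.log Γ) := by
  have hprop (x : 𝒳) : 0 < e x ∧ 0 < 1 - e x ∧ 0 < eη x ∧ 0 < 1 - eη x :=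
    ⟨(he x).1, sub_pos.2 (he x).2, (heη x).1, sub_pos.2 (heη x).2⟩
  have hg1_pos (x : 𝒳) : 0 < g1 x := by
    obtain ⟨_, -, _, -⟩ := hprop x
    have := hp_pos x; have := hf_pos x
    rw [hg1]; positivity
  have hg0_pos (x : 𝒳) : 0 < g0 x := by
    obtain ⟨-, _, -, _⟩ := hprop x
    have := hp_pos x; have := hf_pos x
    rw [hg0]; positivity
  have hg1_int : Integrable g1 μ := by simpa only [← hg1] using hint1.div_const Z1
  have hg0_int : Integrable g0 μ := by simpa only [← hg0] using hint0.div_const Z0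
  have hg1_one : ∫ x, g1 x ∂μ = 1 := by
    simp only [hg1, integral_div, ← hZ1, div_self hZ1_pos.ne']
  have hg0_one : ∫ x, g0 x ∂μ = 1 := by
    simp only [hg0, integral_div, ← hZ0, div_self hZ0_pos.ne']
  have hllr (x : 𝒳) : |log (g1 x / g0 x) - log (Z0 / Z1)| ≤ log Γ := by
    obtain ⟨_, _, _, _⟩ := hprop x
    have := hp_pos x; have := hf_pos x
    have hratio : g1 x / g0 x = e x * (1 - eη x) / (eη x * (1 - e x)) * (Z0 / Z1) := by
      rw [hg1, hg0]; field_simp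
    rw [hratio, log_mul (by positivity) (by positivity), add_sub_cancel_right]
    exact abs_log_le_log_of_inv_le_of_le (by linarith) (by simpa only [one_div] using (hodds x).1)
      (hodds x).2
  have hm1 := hg1_int.aemeasurable
  have hm0 := hg0_int.aemeasurable
  have hS := integral_sub_mul_log_div_le hg1_int hg0_int (fun x => (hg1_pos x).le)
    (fun x => (hg0_pos x).le) hg1_one hg0_one hllr
  have hTV := sq_integral_abs_sub_le_integral_sub_mul_log_div hg1_int hg0_int hg1_pos hg0_pos
    hg1_one hg0_one (integrable_mul_log_div (hg1_int.sub hg0_int) hm1 hm0 hllr)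
  have hlogΓ := log_nonneg hΓ
  rw [integral_mul_log_div_add_integral_mul_log_div_rev (integrable_mul_log_div hg1_int hm1 hm0 hllr)
    (integrable_mul_log_div hg0_int hm1 hm0 hllr)]
  refine ⟨by linarith, (le_sqrt (by positivity) hlogΓ).2 ?_⟩
  linarith [mul_pow (1 / 2 : ℝ) (∫ x, |g1 x - g0 x| ∂μ) 2]

/-- Under the bounded odds-ratio assumption with constant `Γ ≥ 1`, the symmetrized KL
divergence between the reweighted treatment and control densities is at most
`4 log Γ`, and the total variation distance `(1/2)∫|g₁ − g₀|` is at most `√(log Γ)`. -/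
theorem symmetrized_kl_and_tv_bound
    {𝒳 : Type*} [MeasurableSpace 𝒳] (μ : Measure 𝒳)
    (p e eη f : 𝒳 → ℝ) (Γ : ℝ)
    (hp_pos : ∀ x, 0 < p x) (hp_int : Integrable p μ) (hp_one : ∫ x, p x ∂μ = 1)
    (he : ∀ x, 0 < e x ∧ e x < 1) (heη : ∀ x, 0 < eη x ∧ eη x < 1)
    (hf_pos : ∀ x, 0 < f x)
    (hΓ : 1 ≤ Γ)
    (hodds : ∀ x, 1 / Γ ≤ e x * (1 - eη x) / (eη x * (1 - e x)) ∧
                  e x * (1 - eη x) / (eη x * (1 - e x)) ≤ Γ)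
    (Z1 Z0 : ℝ)
    (hZ1 : Z1 = ∫ x, f x * (e x * p x) / eη x ∂μ)
    (hZ0 : Z0 = ∫ x, f x * ((1 - e x) * p x) / (1 - eη x) ∂μ)
    (hint1 : Integrable (fun x => f x * (e x * p x) / eη x) μ)
    (hint0 : Integrable (fun x => f x * ((1 - e x) * p x) / (1 - eη x)) μ)
    (hZ1_pos : 0 < Z1) (hZ0_pos : 0 < Z0)
    (g1 g0 : 𝒳 → ℝ)
    (hg1 : ∀ x, g1 x = f x * (e x * p x) / eη x / Z1)
    (hg0 : ∀ x, g0 x = f x * ((1 - e x) * p x) / (1 - eη x) / Z0) :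
    (∫ x, g1 x * Real.log (g1 x / g0 x) ∂μ)
      + (∫ x, g0 x * Real.log (g0 x / g1 x) ∂μ) ≤ 4 * Real.log Γ ∧
    (1 / 2) * ∫ x, |g1 x - g0 x| ∂μ ≤ Real.sqrt (Real.log Γ) :=
  symmetrized_kl_and_tv_bound_general μ p e eη f Γ hp_pos he heη hf_pos hΓ hodds Z1 Z0 hZ1 hZ0 hint1
    hint0 hZ1_pos hZ0_pos g1 g0 hg1 hg0
end
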